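/- arXiv:2503.18490 — 8 statements merged into one kernel-verified Lean document; each statement's English description precedes it below -/
import Mathlib

section
/- Let G be a graph on vertices {x_1,…,x_d} and let H = w(G) be the whiskered graph obtained by adding new vertices y_1,…,y_d and edges {x_i,y_i} for each i. Then every maximal independent set of H has cardinality exactly d; in particular H is very well-covered. -/
/-- `W` is an independent set of the graph `G`: no edge is contained in `W`. -/
def IsIndep {V : Type*} (G : SimpleGraph V) (W : Finset V) : Prop :=
  ∀ u ∈ W, ∀ v ∈ W, ¬ G.Adj u v

/-- `W` is a maximal independent set of `G`. -/
def MaxIndep {V : Type*} (G : SimpleGraph V) (W : Finset V) : Prop :=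
  IsIndep G W ∧ ∀ W', IsIndep G W' → W ⊆ W' → W = W'

/-- The whiskered graph `w(G)` of a graph `G` on vertices `x_1, …, x_d`
(modelled as `Sum.inl`-vertices): add new vertices `y_1, …, y_d`
(the `Sum.inr`-vertices) and edges `{x_i, y_i}`. -/
def whiskerGraph {d : ℕ} (G : SimpleGraph (Fin d)) : SimpleGraph (Fin d ⊕ Fin d) where
  Adj u v := (∃ a b, u = Sum.inl a ∧ v = Sum.inl b ∧ G.Adj a b) ∨
    (∃ a, (u = Sum.inl a ∧ v = Sum.inr a) ∨ (u = Sum.inr a ∧ v = Sum.inl a))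
  symm := by
    constructor
    rintro u v (⟨a, b, rfl, rfl, h⟩ | ⟨a, ⟨rfl, rfl⟩ | ⟨rfl, rfl⟩⟩)
    · exact Or.inl ⟨b, a, rfl, rfl, h.symm⟩
    · exact Or.inr ⟨a, Or.inr ⟨rfl, rfl⟩⟩
    · exact Or.inr ⟨a, Or.inl ⟨rfl, rfl⟩⟩
  loopless := by
    constructor
    rintro u (⟨a, b, rfl, h, hadj⟩ | ⟨a, ⟨rfl, h⟩ | ⟨rfl, h⟩⟩)
    · simp only [Sum.inl.injEq] at h; subst h; exact hadj.ne rfl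
    · simp at h
    · simp at h

/-- Every maximal independent set of a whiskered graph `w(G)` on `2d` vertices
has cardinality exactly `d`; in particular `w(G)` is very well-covered. -/
theorem stmt_2 {d : ℕ} (G : SimpleGraph (Fin d))
    (W : Finset (Fin d ⊕ Fin d)) (hW : MaxIndep (whiskerGraph G) W) :
    W.card = d := by
  obtain ⟨hind, hmax⟩ := hW
  -- for each i, not both inl i and inr i in W
  have hnotboth : ∀ i : Fin d, ¬ (Sum.inl i ∈ W ∧ Sum.inr i ∈ W) := by
    rintro i ⟨h1, h2⟩
    exact hind _ h1 _ h2 (Or.inr ⟨i, Or.inl ⟨rfl, rfl⟩⟩)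
  -- for each i, at least one of inl i, inr i in W
  have hsome : ∀ i : Fin d, Sum.inl i ∈ W ∨ Sum.inr i ∈ W := by
    intro i
    by_contra h
    push_neg at h
    obtain ⟨h1, h2⟩ := h
    have hind' : IsIndep (whiskerGraph G) (insert (Sum.inr i) W) := by
      intro u hu v hv hadj
      rcases Finset.mem_insert.1 hu with rfl | hu
      · rcases Finset.mem_insert.1 hv with rfl | hv
        · exact (whiskerGraph G).irrefl hadj
        · rcases hadj with ⟨a, b, h, _⟩ | ⟨a, ⟨h, _⟩ | ⟨h, h'⟩⟩
          · cases h
          · cases h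
          · cases h; exact h1 (h' ▸ hv)
      · rcases Finset.mem_insert.1 hv with rfl | hv
        · rcases hadj with ⟨a, b, _, h, _⟩ | ⟨a, ⟨h', h⟩ | ⟨h, h'⟩⟩
          · cases h
          · cases h; exact h1 (h' ▸ hu)
          · cases h'
        · exact hind _ hu _ hv hadj
    have := hmax _ hind' (Finset.subset_insert _ _)
    exact h2 (this ▸ Finset.mem_insert_self _ _)
  have hinj : Set.InjOn (Sum.elim id id : Fin d ⊕ Fin d → Fin d) W := by
    rintro (a | a) ha (b | b) hb hab <;> simp only [Sum.elim_inl, Sum.elim_inr, id] at hab <;>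
      subst hab
    · rfl
    · exact absurd ⟨ha, hb⟩ (hnotboth a)
    · exact absurd ⟨hb, ha⟩ (hnotboth a)
    · rfl
  have himg : W.image (Sum.elim id id) = Finset.univ := by
    apply Finset.eq_univ_of_forall
    intro i
    rcases hsome i with h | h
    · exact Finset.mem_image.2 ⟨_, h, rfl⟩
    · exact Finset.mem_image.2 ⟨_, h, rfl⟩
  calc W.card = (W.image (Sum.elim id id)).card :=
        (Finset.card_image_of_injOn hinj).symm
    _ = d := by rw [himg, Finset.card_univ, Fintype.card_fin]
end

section
/- Let G be a graph on vertex set {x_1,…,x_d,y_1,…,y_d} in which every edge {x_i,y_i} is present and every maximal independent set has cardinality d. Then every independent set of G of cardinality d−1 is contained in at most two maximal independent sets. -/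
/-- Let `G` be a graph on `{x_1, …, x_d, y_1, …, y_d}` in which every
`{x_i, y_i}` is an edge and every maximal independent set has cardinality `d`.
Then every independent set of cardinality `d - 1` is contained in at most two
maximal independent sets (every codimension-one face of the independence
complex is a ridge). -/
theorem stmt_8 {d : ℕ} (G : SimpleGraph (Fin d ⊕ Fin d))
    (hmatch : ∀ i : Fin d, G.Adj (Sum.inl i) (Sum.inr i))
    (hvwc : ∀ W : Finset (Fin d ⊕ Fin d), MaxIndep G W → W.card = d)
    (S : Finset (Fin d ⊕ Fin d)) (hS : IsIndep G S) (hcard : S.card + 1 = d) :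
    ∀ F₁ F₂ F₃ : Finset (Fin d ⊕ Fin d),
      MaxIndep G F₁ → S ⊆ F₁ → MaxIndep G F₂ → S ⊆ F₂ → MaxIndep G F₃ → S ⊆ F₃ →
      F₁ = F₂ ∨ F₁ = F₃ ∨ F₂ = F₃ := by
  intro F₁ F₂ F₃ h₁ hS₁ h₂ hS₂ h₃ hS₃
  set idx : Fin d ⊕ Fin d → Fin d := Sum.elim id id with hidx
  -- idx is injective on any independent set
  have inj : ∀ W : Finset (Fin d ⊕ Fin d), IsIndep G W →
      ∀ u ∈ W, ∀ v ∈ W, idx u = idx v → u = v := by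
    intro W hW u hu v hv h
    rcases u with i | i <;> rcases v with j | j <;> simp [idx] at h <;> subst h
    · rfl
    · exact absurd (hmatch i) (hW _ hu _ hv)
    · exact absurd (hmatch i).symm (hW _ hu _ hv)
    · rfl
  -- get the element of F₁ not in S
  have hcard₁ : F₁.card = d := hvwc F₁ h₁
  have hss : S ⊂ F₁ := hS₁.ssubset_of_ne (by
    intro h; rw [h] at hcard; omega)
  obtain ⟨w, hwF, hwS⟩ := Finset.exists_of_ssubset hss
  set i₀ : Fin d := idx w with hi₀def
  have hi₀ : ∀ u ∈ S, idx u ≠ i₀ := by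
    intro u hu h
    exact hwS (inj F₁ h₁.1 w hwF u (hS₁ hu) h.symm ▸ (inj F₁ h₁.1 u (hS₁ hu) w hwF h) ▸ hu)
  -- any maximal F containing S equals insert (inl i₀) S or insert (inr i₀) S
  have key : ∀ F : Finset (Fin d ⊕ Fin d), MaxIndep G F → S ⊆ F →
      F = insert (Sum.inl i₀) S ∨ F = insert (Sum.inr i₀) S := by
    intro F hF hSF
    have hcardF : F.card = d := hvwc F hF
    have himg : F.image idx = Finset.univ := by
      apply Finset.eq_univ_of_card
      rw [Finset.card_image_of_injOn (fun u hu v hv => inj F hF.1 u hu v hv), hcardF]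
      simp
    have : i₀ ∈ F.image idx := by rw [himg]; exact Finset.mem_univ _
    obtain ⟨z, hzF, hz⟩ := Finset.mem_image.mp this
    have hzS : z ∉ S := fun h => hi₀ z h hz
    have hsub : insert z S ⊆ F := Finset.insert_subset hzF hSF
    have hcardi : (insert z S).card = d := by
      rw [Finset.card_insert_of_notMem hzS]; omega
    have hFeq : F = insert z S :=
      (Finset.eq_of_subset_of_card_le hsub (by omega)).symm
    rcases z with j | j
    · left; simp [idx] at hz; rw [hFeq, hz]
    · right; simp [idx] at hz; rw [hFeq, hz]
  rcases key F₁ h₁ hS₁ with h1 | h1 <;> rcases key F₂ h₂ hS₂ with h2 | h2 <;>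
    rcases key F₃ h₃ hS₃ with h3 | h3 <;> subst h1 <;> subst h2 <;> subst h3 <;> tauto
end

section
/- Let G be a very well-covered graph on 2d vertices, with no isolated vertices, whose edge ideal is Cohen-Macaulay, labelled as in the Crupi–Rinaldo–Terai classification (in particular {x_i,y_i} ∈ E for all i, {y_1,…,y_d} is a maximal independent set, edges {x_i,y_j} imply i ≤ j and imply {x_i,x_j} ∉ E). If G is not a disjoint union of d edges, then the independence complex of G has a face of cardinality d−1 contained in exactly one facet (i.e., the pseudomanifold has boundary). -/
/-- `Y` is a vertex cover of the graph `G`: every edge meets `Y`. -/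
def IsVertexCover {V : Type*} (G : SimpleGraph V) (Y : Finset V) : Prop :=
  ∀ u v, G.Adj u v → u ∈ Y ∨ v ∈ Y

lemma exists_maxIndep_superset {V : Type*} [Fintype V] [DecidableEq V]
    (G : SimpleGraph V) (W : Finset V) (hW : IsIndep G W) :
    ∃ M, MaxIndep G M ∧ W ⊆ M := by
  classical
  let s : Finset (Finset V) :=
    Finset.univ.filter (fun M => IsIndep G M ∧ W ⊆ M)
  have hWs : W ∈ s := by simp [s, hW]
  obtain ⟨M, hMs, hmax⟩ := s.exists_max_image Finset.card ⟨W, hWs⟩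
  simp only [s, Finset.mem_filter] at hMs
  refine ⟨M, ⟨hMs.2.1, ?_⟩, hMs.2.2⟩
  intro W' hW' hsub
  have hW's : W' ∈ s := by
    simp only [s, Finset.mem_filter]
    exact ⟨Finset.mem_univ _, hW', hMs.2.2.trans hsub⟩
  exact Finset.eq_of_subset_of_card_le hsub (hmax _ hW's)

/-- Let `G` be a very well-covered graph on `2d` vertices with no isolated
vertices, whose edge ideal is Cohen-Macaulay, labelled as in the
Crupi–Rinaldo–Terai classification (conditions (1)–(5) below).  If `G` is not a
disjoint union of `d` edges, then the independence complex of `G` has a face of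
cardinality `d - 1` contained in exactly one facet (the pseudomanifold has
boundary).  Here `Sum.inl i` is `x_i` and `Sum.inr i` is `y_i`. -/
theorem stmt_9 {d : ℕ} (G : SimpleGraph (Fin d ⊕ Fin d))
    (hiso : ∀ v, ∃ u, G.Adj v u)
    (hvwc : ∀ W : Finset (Fin d ⊕ Fin d), MaxIndep G W → W.card = d)
    -- (1) {x_1,…,x_d} is a minimal vertex cover and {y_1,…,y_d} a maximal independent set
    (h1a : IsVertexCover G (Finset.univ.image Sum.inl) ∧
      ∀ Y, IsVertexCover G Y → Y ⊆ Finset.univ.image Sum.inl →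
        Y = Finset.univ.image Sum.inl)
    (h1b : MaxIndep G (Finset.univ.image Sum.inr))
    -- (2) each {x_i, y_i} is an edge
    (h2 : ∀ i : Fin d, G.Adj (Sum.inl i) (Sum.inr i))
    -- (3) if {z_i,x_j} and {y_j,x_k} are edges for distinct i,j,k then {z_i,x_k} is an edge
    (h3 : ∀ i j k : Fin d, i ≠ j → j ≠ k → i ≠ k →
      ∀ z ∈ ({Sum.inl i, Sum.inr i} : Finset (Fin d ⊕ Fin d)),
        G.Adj z (Sum.inl j) → G.Adj (Sum.inr j) (Sum.inl k) → G.Adj z (Sum.inl k))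
    -- (4) {x_i,y_j} an edge implies {x_i,x_j} is not an edge
    (h4 : ∀ i j : Fin d, G.Adj (Sum.inl i) (Sum.inr j) → ¬ G.Adj (Sum.inl i) (Sum.inl j))
    -- (5) {x_i,y_j} an edge implies i ≤ j
    (h5 : ∀ i j : Fin d, G.Adj (Sum.inl i) (Sum.inr j) → i ≤ j)
    -- G is not a disjoint union of d edges
    (hne : ∃ u v, G.Adj u v ∧
      ∀ i : Fin d, ¬((u = Sum.inl i ∧ v = Sum.inr i) ∨ (u = Sum.inr i ∧ v = Sum.inl i))) :
    ∃ S : Finset (Fin d ⊕ Fin d), IsIndep G S ∧ S.card + 1 = d ∧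
      ∃! F : Finset (Fin d ⊕ Fin d), MaxIndep G F ∧ S ⊆ F := by

  classical
  set Y : Finset (Fin d ⊕ Fin d) := Finset.univ.image Sum.inr with hYdef
  have hYcard : Y.card = d := by
    rw [hYdef, Finset.card_image_of_injective _ Sum.inr_injective, Finset.card_univ,
      Fintype.card_fin]
  have hmemY : ∀ k : Fin d, Sum.inr k ∈ Y := by
    intro k; rw [hYdef]; exact Finset.mem_image_of_mem _ (Finset.mem_univ k)
  have hmaxOf : ∀ W : Finset (Fin d ⊕ Fin d), IsIndep G W → W.card = d → MaxIndep G W := by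
    intro W hind hcard
    refine ⟨hind, fun W' hW' hsub => ?_⟩
    obtain ⟨M, hM, hsub'⟩ := exists_maxIndep_superset G W' hW'
    have hMd := hvwc M hM
    have hWM : W = M := Finset.eq_of_subset_of_card_le (hsub.trans hsub')
      (by rw [hMd, hcard])
    exact Finset.Subset.antisymm hsub (hWM ▸ hsub')
  have key : ∀ F : Finset (Fin d ⊕ Fin d), MaxIndep G F →
      ∀ S : Finset (Fin d ⊕ Fin d), S ⊆ F → S.card + 1 = d →
      ∃ w, w ∉ S ∧ F = insert w S := by
    intro F hF S hsub hcard
    have hFd := hvwc F hF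
    have h1 : (F \ S).card = 1 := by
      rw [Finset.card_sdiff_of_subset hsub, hFd]; omega
    obtain ⟨w, hw⟩ := Finset.card_eq_one.mp h1
    have hwFS : w ∈ F \ S := hw ▸ Finset.mem_singleton_self w
    have hwS : w ∉ S := (Finset.mem_sdiff.mp hwFS).2
    refine ⟨w, hwS, Finset.Subset.antisymm ?_ (Finset.insert_subset (Finset.mem_sdiff.mp hwFS).1 hsub)⟩
    intro x hx
    by_cases hxS : x ∈ S
    · exact Finset.mem_insert_of_mem hxS
    · have hxFS : x ∈ F \ S := Finset.mem_sdiff.mpr ⟨hx, hxS⟩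
      rw [hw, Finset.mem_singleton] at hxFS
      simp [hxFS]
  by_cases hxy : ∃ i j : Fin d, i ≠ j ∧ G.Adj (Sum.inl i) (Sum.inr j)
  · -- Case 1: there is an edge x_i y_j with i ≠ j
    obtain ⟨i, j, hij, hadj⟩ := hxy
    refine ⟨Y.erase (Sum.inr i), ?_, ?_, ?_⟩
    · intro u hu v hv
      exact h1b.1 u (Finset.mem_of_mem_erase hu) v (Finset.mem_of_mem_erase hv)
    · rw [Finset.card_erase_add_one (hmemY i), hYcard]
    · have hScard : (Y.erase (Sum.inr i)).card + 1 = d := by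
        rw [Finset.card_erase_add_one (hmemY i), hYcard]
      refine ⟨Y, ⟨h1b, Finset.erase_subset _ _⟩, ?_⟩
      rintro F ⟨hF, hSF⟩
      obtain ⟨w, hwS, hFw⟩ := key F hF _ hSF hScard
      have hjS : Sum.inr j ∈ Y.erase (Sum.inr i) :=
        Finset.mem_erase.mpr ⟨by simpa using hij.symm, hmemY j⟩
      rcases w with k | k
      · exfalso
        by_cases hki : k = i
        · subst hki
          exact hF.1 (Sum.inl k) (hFw ▸ Finset.mem_insert_self _ _)
            (Sum.inr j) (hFw ▸ Finset.mem_insert_of_mem hjS) hadj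
        · have hkS : Sum.inr k ∈ Y.erase (Sum.inr i) :=
            Finset.mem_erase.mpr ⟨by simpa using hki, hmemY k⟩
          exact hF.1 (Sum.inl k) (hFw ▸ Finset.mem_insert_self _ _)
            (Sum.inr k) (hFw ▸ Finset.mem_insert_of_mem hkS) (h2 k)
      · by_cases hki : k = i
        · subst hki
          rw [hFw, Finset.insert_erase (hmemY k)]
        · exact absurd (Finset.mem_erase.mpr ⟨by simpa using hki, hmemY k⟩) hwS
  · -- Case 2: no edge x_i y_j with i ≠ j; get an edge x_a x_b
    push_neg at hxy
    obtain ⟨u, v, huv, hnm⟩ := hne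
    have hxx : ∃ a b : Fin d, a ≠ b ∧ G.Adj (Sum.inl a) (Sum.inl b) := by
      rcases u with a | a <;> rcases v with b | b
      · refine ⟨a, b, fun h => ?_, huv⟩
        exact huv.ne (by rw [h])
      · by_cases hab : a = b
        · exact absurd (Or.inl ⟨rfl, by rw [hab]⟩) (hnm a)
        · exact absurd huv (hxy a b hab)
      · by_cases hab : b = a
        · exact absurd (Or.inr ⟨rfl, by rw [hab]⟩) (hnm a)
        · exact absurd huv.symm (hxy b a hab)
      · exact absurd huv (h1b.1 _ (hmemY a) _ (hmemY b))
    obtain ⟨a, b, hab, hadjx⟩ := hxx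
    have hd2 : 2 ≤ d := by
      have : Nontrivial (Fin d) := ⟨a, b, hab⟩
      exact (by simpa using Fintype.one_lt_card_iff_nontrivial.mpr this : 1 < d)
    set S : Finset (Fin d ⊕ Fin d) :=
      insert (Sum.inl a) ((Y.erase (Sum.inr a)).erase (Sum.inr b)) with hSdef
    have hmemS : ∀ w, w ∈ S ↔
        (w = Sum.inl a ∨ ∃ k : Fin d, k ≠ a ∧ k ≠ b ∧ w = Sum.inr k) := by
      intro w
      rw [hSdef, Finset.mem_insert, Finset.mem_erase, Finset.mem_erase]
      constructor
      · rintro (h | ⟨hb, ha, hw⟩)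
        · exact Or.inl h
        · rw [hYdef] at hw
          obtain ⟨k, -, hk⟩ := Finset.mem_image.mp hw
          refine Or.inr ⟨k, ?_, ?_, hk.symm⟩
          · rintro rfl; exact ha (hk ▸ rfl)
          · rintro rfl; exact hb (hk ▸ rfl)
      · rintro (h | ⟨k, hka, hkb, rfl⟩)
        · exact Or.inl h
        · exact Or.inr ⟨by simpa using hkb, by simpa using hka, hmemY k⟩
    have hSind : IsIndep G S := by
      intro p hp q hq hpq
      rw [hmemS] at hp hq
      rcases hp with rfl | ⟨k, hka, hkb, rfl⟩ <;>
        rcases hq with rfl | ⟨l, hla, hlb, rfl⟩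
      · exact G.irrefl hpq
      · exact hxy a l (Ne.symm hla) hpq
      · exact hxy a k (Ne.symm hka) hpq.symm
      · exact h1b.1 _ (hmemY k) _ (hmemY l) hpq
    have hScard : S.card + 1 = d := by
      have hbY : Sum.inr b ∈ Y.erase (Sum.inr a) :=
        Finset.mem_erase.mpr ⟨by simpa using hab.symm, hmemY b⟩
      have hnotmem : (Sum.inl a : Fin d ⊕ Fin d) ∉ (Y.erase (Sum.inr a)).erase (Sum.inr b) := by
        intro h
        have := Finset.mem_of_mem_erase (Finset.mem_of_mem_erase h)
        rw [hYdef] at this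
        obtain ⟨k, -, hk⟩ := Finset.mem_image.mp this
        exact Sum.inl_ne_inr hk.symm
      rw [hSdef, Finset.card_insert_of_notMem hnotmem]
      have e1 : ((Y.erase (Sum.inr a)).erase (Sum.inr b)).card + 1 = (Y.erase (Sum.inr a)).card :=
        Finset.card_erase_add_one hbY
      have e2 : (Y.erase (Sum.inr a)).card + 1 = Y.card :=
        Finset.card_erase_add_one (hmemY a)
      omega
    have hbS : (Sum.inr b : Fin d ⊕ Fin d) ∉ S := by
      rw [hmemS]
      rintro (h | ⟨k, hka, hkb, hk⟩)
      · exact Sum.inl_ne_inr h.symm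
      · exact hkb (Sum.inr_injective hk.symm)
    have hF0ind : IsIndep G (insert (Sum.inr b) S) := by
      intro p hp q hq hpq
      rw [Finset.mem_insert] at hp hq
      have hb' : ∀ r ∈ S, ¬ G.Adj (Sum.inr b) r := by
        intro r hr hadj'
        rw [hmemS] at hr
        rcases hr with rfl | ⟨k, hka, hkb, rfl⟩
        · exact hxy a b hab hadj'.symm
        · exact h1b.1 _ (hmemY b) _ (hmemY k) hadj'
      rcases hp with rfl | hp <;> rcases hq with rfl | hq
      · exact G.irrefl hpq
      · exact hb' q hq hpq
      · exact hb' p hp hpq.symm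
      · exact hSind p hp q hq hpq
    have hF0card : (insert (Sum.inr b) S).card = d := by
      rw [Finset.card_insert_of_notMem hbS]; omega
    have hF0max : MaxIndep G (insert (Sum.inr b) S) := hmaxOf _ hF0ind hF0card
    refine ⟨S, hSind, hScard, insert (Sum.inr b) S,
      ⟨hF0max, Finset.subset_insert _ _⟩, ?_⟩
    rintro F ⟨hF, hSF⟩
    obtain ⟨w, hwS, hFw⟩ := key F hF S hSF hScard
    have haF : Sum.inl a ∈ F := hSF ((hmemS _).mpr (Or.inl rfl))
    rcases w with k | k
    · exfalso
      by_cases hka : k = a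
      · exact hwS ((hmemS _).mpr (Or.inl (by rw [hka])))
      · by_cases hkb : k = b
        · subst hkb
          exact hF.1 _ haF _ (hFw ▸ Finset.mem_insert_self _ _) hadjx
        · have : Sum.inr k ∈ S := (hmemS _).mpr (Or.inr ⟨k, hka, hkb, rfl⟩)
          exact hF.1 (Sum.inl k) (hFw ▸ Finset.mem_insert_self _ _)
            (Sum.inr k) (hSF this) (h2 k)
    · by_cases hka : k = a
      · exfalso
        subst hka
        exact hF.1 _ haF _ (hFw ▸ Finset.mem_insert_self _ _) (h2 k)
      · by_cases hkb : k = b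
        · rw [hFw, hkb]
        · exact absurd ((hmemS _).mpr (Or.inr ⟨k, hka, hkb, rfl⟩)) hwS
end

section
/- Let G be a bipartite graph without isolated vertices, with bipartition V = V_1 ∪ V_2, such that all maximal independent sets of G have the same cardinality (G is well-covered). Then |V_1| = |V_2| = |V|/2, and G is very well-covered. -/
/-- Let `G` be a bipartite graph without isolated vertices, with bipartition
`V = A ∪ Aᶜ`, such that all maximal independent sets have the same cardinality
(`G` is well-covered). Then `|A| = |Aᶜ| = |V|/2` and `G` is very well-covered:
every maximal independent set has cardinality `|V|/2`. -/
theorem stmt_11 {V : Type*} [Fintype V] [DecidableEq V] (G : SimpleGraph V)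
    (A : Finset V)
    (hbip : ∀ u v, G.Adj u v → (u ∈ A ↔ v ∉ A))
    (hiso : ∀ v, ∃ u, G.Adj v u)
    (hwc : ∃ k : ℕ, ∀ W : Finset V, MaxIndep G W → W.card = k) :
    2 * A.card = Fintype.card V ∧ 2 * Aᶜ.card = Fintype.card V ∧
      ∀ W : Finset V, MaxIndep G W → 2 * W.card = Fintype.card V := by
  obtain ⟨k, hk⟩ := hwc
  have hA : MaxIndep G A := by
    constructor
    · intro u hu v hv hadj
      exact ((hbip u v hadj).mp hu) hv
    · intro W' hW' hsub
      refine Finset.Subset.antisymm hsub ?_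
      intro v hv
      by_contra hvA
      obtain ⟨u, hu⟩ := hiso v
      have huA : u ∈ A := by
        by_contra huA
        exact huA ((hbip u v hu.symm).mpr hvA)
      exact hW' v hv u (hsub huA) hu
  have hAc : MaxIndep G Aᶜ := by
    constructor
    · intro u hu v hv hadj
      rw [Finset.mem_compl] at hu hv
      exact hu ((hbip u v hadj).mpr hv)
    · intro W' hW' hsub
      refine Finset.Subset.antisymm hsub ?_
      intro v hv
      by_contra hvA
      rw [Finset.mem_compl, not_not] at hvA
      obtain ⟨u, hu⟩ := hiso v
      have huA : u ∈ Aᶜ := Finset.mem_compl.mpr ((hbip v u hu).mp hvA)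
      exact hW' v hv u (hsub huA) hu
  have h1 : A.card = k := hk A hA
  have h2 : Aᶜ.card = k := hk Aᶜ hAc
  have hsum : A.card + Aᶜ.card = Fintype.card V := Finset.card_add_card_compl A
  have h2k : 2 * k = Fintype.card V := by omega
  exact ⟨by omega, by omega, fun W hW => by rw [hk W hW]; exact h2k⟩
end

section
/- Let G be a graph on vertex set {x_1,…,x_d,y_1,…,y_d} where each {x_i,y_i} is an edge and each y_i has degree 1 (i.e., G is a whiskered graph). If G is not dK_2 (i.e., some edge {x_i,x_j} exists with i ≠ j), then the independence complex of G has a face of size d−1 contained in exactly one maximal independent set. -/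
/-- Let `G` be a whiskered graph on `{x_1, …, x_d, y_1, …, y_d}`: each
`{x_i, y_i}` is an edge and each `y_i` has degree 1.  If `G ≠ dK_2`, i.e. some
edge `{x_i, x_j}` with `i ≠ j` exists, then the independence complex of `G`
has a face of size `d - 1` contained in exactly one maximal independent set.
Here `Sum.inl i = x_i` and `Sum.inr i = y_i`. -/
theorem stmt_14 {d : ℕ} (G : SimpleGraph (Fin d ⊕ Fin d))
    (hmatch : ∀ i : Fin d, G.Adj (Sum.inl i) (Sum.inr i))
    (hpendant : ∀ i : Fin d, ∀ u, G.Adj (Sum.inr i) u → u = Sum.inl i)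
    (hne : ∃ i j : Fin d, i ≠ j ∧ G.Adj (Sum.inl i) (Sum.inl j)) :
    ∃ S : Finset (Fin d ⊕ Fin d), IsIndep G S ∧ S.card + 1 = d ∧
      ∃! F : Finset (Fin d ⊕ Fin d), MaxIndep G F ∧ S ⊆ F := by
  obtain ⟨i, j, hij, hadj⟩ := hne
  have hd2 : 2 ≤ d := by
    by_contra h
    push_neg at h
    interval_cases d
    · exact i.elim0
    · exact hij (Subsingleton.elim i j)
  -- S = {x_j} ∪ {y_k : k ≠ i, j}
  set T : Finset (Fin d) := (Finset.univ.erase i).erase j with hT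
  set S : Finset (Fin d ⊕ Fin d) := insert (Sum.inl j) (T.image Sum.inr) with hS
  set F : Finset (Fin d ⊕ Fin d) := insert (Sum.inr i) S with hF
  have hmemS : ∀ w, w ∈ S ↔ w = Sum.inl j ∨ ∃ k, k ≠ j ∧ k ≠ i ∧ w = Sum.inr k := by
    intro w
    simp only [hS, hT, Finset.mem_insert, Finset.mem_image, Finset.mem_erase,
      Finset.mem_univ, and_true]
    constructor
    · rintro (h | ⟨k, ⟨hk1, hk2⟩, rfl⟩)
      · exact Or.inl h
      · exact Or.inr ⟨k, hk1, hk2, rfl⟩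
    · rintro (h | ⟨k, hk1, hk2, rfl⟩)
      · exact Or.inl h
      · exact Or.inr ⟨k, ⟨hk1, hk2⟩, rfl⟩
  have hmemF : ∀ w, w ∈ F ↔ w = Sum.inr i ∨ w ∈ S := by
    intro w; simp [hF]
  -- independence of F (hence of S)
  have hFindep : IsIndep G F := by
    intro u hu v hv hadjv
    rw [hmemF, hmemS] at hu hv
    rcases hu with rfl | rfl | ⟨k, hk1, hk2, rfl⟩ <;>
      rcases hv with rfl | rfl | ⟨l, hl1, hl2, rfl⟩
    · exact G.loopless.irrefl _ hadjv
    · exact hij (Sum.inl.inj (hpendant i _ hadjv)).symm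
    · exact Sum.inr_ne_inl (hpendant i _ hadjv)
    · exact hij (Sum.inl.inj (hpendant i _ hadjv.symm)).symm
    · exact G.loopless.irrefl _ hadjv
    · exact hl1 (Sum.inl.inj (hpendant l _ hadjv.symm)).symm
    · exact Sum.inr_ne_inl (hpendant k _ hadjv)
    · exact hk1 (Sum.inl.inj (hpendant k _ hadjv)).symm
    · exact Sum.inr_ne_inl (hpendant k _ hadjv)
  have hSsubF : S ⊆ F := Finset.subset_insert _ _
  have hSindep : IsIndep G S := fun u hu v hv => hFindep u (hSsubF hu) v (hSsubF hv)
  -- key: any independent set containing F is contained in F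
  have key : ∀ W : Finset (Fin d ⊕ Fin d), IsIndep G W → F ⊆ W → W ⊆ F := by
    intro W hW hFW w hw
    have hj : Sum.inl j ∈ W := hFW ((hmemF _).2 (Or.inr ((hmemS _).2 (Or.inl rfl))))
    rw [hmemF, hmemS]
    rcases w with k | k
    · -- w = x_k
      by_cases hkj : k = j
      · exact Or.inr (Or.inl (by rw [hkj]))
      by_cases hki : k = i
      · subst hki
        exact absurd hadj (hW _ hw _ hj)
      · have hrk : Sum.inr k ∈ W :=
          hFW ((hmemF _).2 (Or.inr ((hmemS _).2 (Or.inr ⟨k, hkj, hki, rfl⟩))))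
        exact absurd (hmatch k) (hW _ hw _ hrk)
    · -- w = y_k
      by_cases hki : k = i
      · exact Or.inl (by rw [hki])
      by_cases hkj : k = j
      · subst hkj
        exact absurd (hmatch k).symm (hW _ hw _ hj)
      · exact Or.inr (Or.inr ⟨k, hkj, hki, rfl⟩)
  have hFmax : MaxIndep G F := by
    refine ⟨hFindep, fun W' hW' hsub => Finset.Subset.antisymm hsub (key W' hW' hsub)⟩
  refine ⟨S, hSindep, ?_, F, ⟨hFmax, hSsubF⟩, ?_⟩
  · -- card
    have h1 : Sum.inl j ∉ T.image Sum.inr := by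
      intro h
      obtain ⟨k, _, hk⟩ := Finset.mem_image.1 h
      exact Sum.inl_ne_inr hk.symm
    have h2 : (T.image Sum.inr).card = T.card :=
      Finset.card_image_of_injective _ (Sum.inr_injective (α := Fin d) (β := Fin d))
    have h3 : T.card = d - 2 := by
      have hjm : j ∈ Finset.univ.erase i := Finset.mem_erase.2 ⟨hij.symm, Finset.mem_univ j⟩
      rw [hT, Finset.card_erase_of_mem hjm, Finset.card_erase_of_mem (Finset.mem_univ i),
        Finset.card_univ, Fintype.card_fin]
      omega
    rw [hS, Finset.card_insert_of_notMem h1, h2, h3]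
    omega
  · -- uniqueness
    rintro W ⟨⟨hWindep, hWmax⟩, hSW⟩
    -- first, y_i ∈ W
    have hri : Sum.inr i ∈ W := by
      have hins : IsIndep G (insert (Sum.inr i) W) := by
        intro u hu v hv hadjv
        rw [Finset.mem_insert] at hu hv
        rcases hu with rfl | hu <;> rcases hv with rfl | hv
        · exact G.loopless.irrefl _ hadjv
        · have := hpendant i _ hadjv
          subst this
          have hj : Sum.inl j ∈ W := hSW ((hmemS _).2 (Or.inl rfl))
          exact absurd hadj (hWindep _ hv _ hj)
        · have := hpendant i _ hadjv.symm
          subst this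
          have hj : Sum.inl j ∈ W := hSW ((hmemS _).2 (Or.inl rfl))
          exact absurd hadj (hWindep _ hu _ hj)
        · exact hWindep _ hu _ hv hadjv
      have := hWmax _ hins (Finset.subset_insert _ _)
      rw [this]
      exact Finset.mem_insert_self _ _
    have hFW : F ⊆ W := by
      intro w hw
      rw [hmemF] at hw
      rcases hw with rfl | hw
      · exact hri
      · exact hSW hw
    exact hWmax F hFindep (key W hWindep hFW)
end

section
/- Let G be a graph on vertex set {x_1,…,x_d,y_1,…,y_d} such that each {x_i,y_i} is an edge. Then the number of maximal independent sets of G is at most 2^d; if moreover G = dK_2, this number is exactly 2^d. -/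
open Finset

open scoped Classical

/-- The family of independent subsets of `T` dominating `S`. -/
noncomputable def Fam {V : Type*} [DecidableEq V] (G : SimpleGraph V) (S T : Finset V) :
    Finset (Finset V) :=
  T.powerset.filter (fun W => IsIndep G W ∧ ∀ z ∈ S, z ∉ W → ∃ w ∈ W, G.Adj z w)

lemma mem_Fam {V : Type*} [DecidableEq V] {G : SimpleGraph V} {S T W : Finset V} :
    W ∈ Fam G S T ↔ W ⊆ T ∧ IsIndep G W ∧ ∀ z ∈ S, z ∉ W → ∃ w ∈ W, G.Adj z w := by
  simp [Fam, Finset.mem_filter, Finset.mem_powerset]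

lemma fam_noedge {V : Type*} [DecidableEq V] (G : SimpleGraph V) (S T : Finset V)
    (hTS : T ⊆ S) (hno : ∀ u ∈ T, ∀ v ∈ T, ¬ G.Adj u v) :
    ∑ W ∈ Fam G S T, 2 ^ W.card ≤ 2 ^ T.card := by
  have hsub : Fam G S T ⊆ {T} := by
    intro W hW
    rw [mem_Fam] at hW
    obtain ⟨hWT, hInd, hdom⟩ := hW
    have hTW : T ⊆ W := by
      intro t ht
      by_contra htW
      obtain ⟨w, hwW, hadj⟩ := hdom t (hTS ht) htW
      exact hno t ht w (hWT hwW) hadj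
    rw [Finset.mem_singleton]
    exact Finset.Subset.antisymm hWT hTW
  calc ∑ W ∈ Fam G S T, 2 ^ W.card ≤ ∑ W ∈ ({T} : Finset (Finset V)), 2 ^ W.card :=
        Finset.sum_le_sum_of_subset hsub
    _ = 2 ^ T.card := by simp

lemma key_lemma {V : Type*} [DecidableEq V] (G : SimpleGraph V) :
    ∀ n : ℕ, ∀ T S : Finset V, T.card ≤ n → T ⊆ S →
      ∑ W ∈ Fam G S T, 2 ^ W.card ≤ 2 ^ T.card := by
  intro n
  induction n with
  | zero =>
    intro T S hT hTS
    have hT0 : T = ∅ := Finset.card_eq_zero.1 (Nat.le_zero.1 hT)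
    exact fam_noedge G S T hTS (by intro u hu; rw [hT0] at hu; simp at hu)
  | succ n ih =>
    intro T S hT hTS
    by_cases hedge : ∃ u ∈ T, ∃ v ∈ T, G.Adj u v
    · obtain ⟨u, hu, v, hv, huv⟩ := hedge
      have hune : u ≠ v := G.ne_of_adj huv
      have h2T : 2 ≤ T.card := by
        have : ({u, v} : Finset V) ⊆ T := by
          intro z hz; rcases Finset.mem_insert.1 hz with rfl | hz
          · exact hu
          · rw [Finset.mem_singleton] at hz; exact hz ▸ hv
        calc 2 = ({u, v} : Finset V).card := by rw [Finset.card_insert_of_notMem (by simp [hune]), Finset.card_singleton]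
          _ ≤ T.card := Finset.card_le_card this
      -- split the family by membership of v
      have hsplit := (Finset.sum_filter_add_sum_filter_not (Fam G S T) (fun W => v ∈ W)
        (fun W => 2 ^ W.card)).symm
      -- part with v ∉ W
      have hpart2 : ∑ W ∈ (Fam G S T).filter (fun W => v ∉ W), 2 ^ W.card
          ≤ 2 ^ (T.card - 1) := by
        have hsub : (Fam G S T).filter (fun W => v ∉ W) ⊆ Fam G S (T.erase v) := by
          intro W hW
          rw [Finset.mem_filter, mem_Fam] at hW
          obtain ⟨⟨hWT, hInd, hdom⟩, hvW⟩ := hW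
          exact mem_Fam.2 ⟨Finset.subset_erase.2 ⟨hWT, hvW⟩, hInd, hdom⟩
        have hce : (T.erase v).card = T.card - 1 := Finset.card_erase_of_mem hv
        calc ∑ W ∈ (Fam G S T).filter (fun W => v ∉ W), 2 ^ W.card
            ≤ ∑ W ∈ Fam G S (T.erase v), 2 ^ W.card := Finset.sum_le_sum_of_subset hsub
          _ ≤ 2 ^ (T.erase v).card := ih (T.erase v) S (by omega) ((Finset.erase_subset _ _).trans hTS)
          _ = 2 ^ (T.card - 1) := by rw [hce]
      -- part with v ∈ W
      set T' := (T.erase v).filter (fun z => ¬ G.Adj v z) with hT'def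
      set S' := S.filter (fun z => z ≠ v ∧ ¬ G.Adj v z) with hS'def
      have hT'S' : T' ⊆ S' := by
        intro z hz
        rw [hT'def, Finset.mem_filter, Finset.mem_erase] at hz
        exact Finset.mem_filter.2 ⟨hTS hz.1.2, hz.1.1, hz.2⟩
      have hT'card : T'.card + 2 ≤ T.card := by
        have hsub : T' ⊆ (T.erase v).erase u := by
          intro z hz
          rw [hT'def, Finset.mem_filter] at hz
          refine Finset.mem_erase.2 ⟨?_, hz.1⟩
          rintro rfl
          exact hz.2 huv.symm
        have h1 : ((T.erase v).erase u).card = T.card - 2 := by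
          have hu' : u ∈ T.erase v := Finset.mem_erase.2 ⟨hune, hu⟩
          rw [Finset.card_erase_of_mem hu', Finset.card_erase_of_mem hv]
          omega
        have := Finset.card_le_card hsub
        omega
      have hpart1 : ∑ W ∈ (Fam G S T).filter (fun W => v ∈ W), 2 ^ W.card
          ≤ 2 * 2 ^ T'.card := by
        have himg : ((Fam G S T).filter (fun W => v ∈ W)).image (fun W => W.erase v)
            ⊆ Fam G S' T' := by
          intro R hR
          obtain ⟨W, hW, rfl⟩ := Finset.mem_image.1 hR
          rw [Finset.mem_filter, mem_Fam] at hW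
          obtain ⟨⟨hWT, hInd, hdom⟩, hvW⟩ := hW
          refine mem_Fam.2 ⟨?_, ?_, ?_⟩
          · intro z hz
            have hzW := Finset.mem_of_mem_erase hz
            have hznv := Finset.ne_of_mem_erase hz
            refine Finset.mem_filter.2 ⟨Finset.mem_erase.2 ⟨hznv, hWT hzW⟩, ?_⟩
            exact hInd v hvW z hzW
          · intro a ha b hb
            exact hInd a (Finset.mem_of_mem_erase ha) b (Finset.mem_of_mem_erase hb)
          · intro z hzS' hzR
            rw [hS'def, Finset.mem_filter] at hzS'
            obtain ⟨hzS, hznv, hznadj⟩ := hzS'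
            have hzW : z ∉ W := by
              intro hzW
              exact hzR (Finset.mem_erase.2 ⟨hznv, hzW⟩)
            obtain ⟨w, hwW, hzw⟩ := hdom z hzS hzW
            have hwnv : w ≠ v := by
              rintro rfl
              exact hznadj hzw.symm
            exact ⟨w, Finset.mem_erase.2 ⟨hwnv, hwW⟩, hzw⟩
        have hinj : ∀ W1 ∈ (Fam G S T).filter (fun W => v ∈ W),
            ∀ W2 ∈ (Fam G S T).filter (fun W => v ∈ W),
            W1.erase v = W2.erase v → W1 = W2 := by
          intro W1 h1 W2 h2 he
          have hv1 : v ∈ W1 := (Finset.mem_filter.1 h1).2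
          have hv2 : v ∈ W2 := (Finset.mem_filter.1 h2).2
          rw [← Finset.insert_erase hv1, ← Finset.insert_erase hv2, he]
        have hcardW : ∀ W ∈ (Fam G S T).filter (fun W => v ∈ W),
            2 ^ W.card = 2 * 2 ^ (W.erase v).card := by
          intro W hW
          have hvW : v ∈ W := (Finset.mem_filter.1 hW).2
          have hpos : 1 ≤ W.card := Finset.card_pos.2 ⟨v, hvW⟩
          rw [Finset.card_erase_of_mem hvW]
          obtain ⟨m, hm⟩ : ∃ m, W.card = m + 1 := ⟨W.card - 1, by omega⟩
          rw [hm]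
          simp [pow_succ, Nat.mul_comm]
        calc ∑ W ∈ (Fam G S T).filter (fun W => v ∈ W), 2 ^ W.card
            = ∑ W ∈ (Fam G S T).filter (fun W => v ∈ W), 2 * 2 ^ (W.erase v).card :=
              Finset.sum_congr rfl hcardW
          _ = 2 * ∑ W ∈ (Fam G S T).filter (fun W => v ∈ W), 2 ^ (W.erase v).card := by
              rw [Finset.mul_sum]
          _ = 2 * ∑ R ∈ ((Fam G S T).filter (fun W => v ∈ W)).image (fun W => W.erase v),
                2 ^ R.card := by rw [Finset.sum_image hinj]
          _ ≤ 2 * ∑ R ∈ Fam G S' T', 2 ^ R.card := by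
              exact Nat.mul_le_mul_left 2 (Finset.sum_le_sum_of_subset himg)
          _ ≤ 2 * 2 ^ T'.card := by
              exact Nat.mul_le_mul_left 2 (ih T' S' (by omega) hT'S')
      -- combine
      obtain ⟨k, hk⟩ : ∃ k, T.card = k + 2 := ⟨T.card - 2, by omega⟩
      have hb1 : 2 * 2 ^ T'.card ≤ 2 ^ (k + 1) := by
        have : T'.card ≤ k := by omega
        calc 2 * 2 ^ T'.card ≤ 2 * 2 ^ k := by
              exact Nat.mul_le_mul_left 2 (Nat.pow_le_pow_right (by norm_num) this)
          _ = 2 ^ (k + 1) := by rw [pow_succ, Nat.mul_comm]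
      have hb2 : (2 : ℕ) ^ (T.card - 1) = 2 ^ (k + 1) := by
        rw [hk]
        congr 1
      rw [hsplit, hk]
      calc ∑ W ∈ (Fam G S T).filter (fun W => v ∈ W), 2 ^ W.card
            + ∑ W ∈ (Fam G S T).filter (fun W => v ∉ W), 2 ^ W.card
          ≤ 2 ^ (k + 1) + 2 ^ (k + 1) := by
            have := hpart1.trans hb1
            have h2' := hpart2
            rw [hb2] at h2'
            omega
        _ = 2 ^ (k + 2) := by ring
    · push_neg at hedge
      exact fam_noedge G S T hTS hedge

lemma maxIndep_iff {V : Type*} [DecidableEq V] (G : SimpleGraph V) (W : Finset V) :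
    MaxIndep G W ↔ IsIndep G W ∧ ∀ z, z ∉ W → ∃ w ∈ W, G.Adj z w := by
  constructor
  · rintro ⟨h1, h2⟩
    refine ⟨h1, fun z hz => ?_⟩
    by_contra hno
    push_neg at hno
    have hind : IsIndep G (insert z W) := by
      intro a ha b hb
      rcases Finset.mem_insert.1 ha with rfl | ha'
      · rcases Finset.mem_insert.1 hb with rfl | hb'
        · exact fun h => G.loopless.irrefl _ h
        · exact hno b hb'
      · rcases Finset.mem_insert.1 hb with rfl | hb'
        · exact fun h => hno a ha' h.symm
        · exact h1 a ha' b hb'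
    have heq := h2 _ hind (Finset.subset_insert _ _)
    have : z ∈ W := by rw [heq]; exact Finset.mem_insert_self z W
    exact hz this
  · rintro ⟨h1, h2⟩
    refine ⟨h1, fun W' hW' hsub => ?_⟩
    refine Finset.Subset.antisymm hsub (fun w' hw' => ?_)
    by_contra hnotin
    obtain ⟨w, hwW, hadj⟩ := h2 w' hnotin
    exact hW' w' hw' w (hsub hwW) hadj

/-- the transversal determined by `c`. -/
def Tc {d : ℕ} (c : Fin d → Bool) : Finset (Fin d ⊕ Fin d) :=
  Finset.univ.image (fun i => if c i then Sum.inl i else Sum.inr i)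

lemma mem_Tc_inl {d : ℕ} (c : Fin d → Bool) (j : Fin d) :
    Sum.inl j ∈ Tc c ↔ c j = true := by
  constructor
  · intro h
    obtain ⟨i, -, hi⟩ := Finset.mem_image.1 h
    by_cases hci : c i = true
    · rw [if_pos hci] at hi
      cases Sum.inl_injective hi
      exact hci
    · rw [if_neg hci] at hi
      exact absurd hi (by simp)
  · intro h
    exact Finset.mem_image.2 ⟨j, Finset.mem_univ j, by rw [if_pos h]⟩

lemma mem_Tc_inr {d : ℕ} (c : Fin d → Bool) (j : Fin d) :
    Sum.inr j ∈ Tc c ↔ c j = false := by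
  constructor
  · intro h
    obtain ⟨i, -, hi⟩ := Finset.mem_image.1 h
    by_cases hci : c i = true
    · rw [if_pos hci] at hi
      exact absurd hi (by simp)
    · rw [if_neg hci] at hi
      cases Sum.inr_injective hi
      simpa using hci
  · intro h
    refine Finset.mem_image.2 ⟨j, Finset.mem_univ j, ?_⟩
    rw [if_neg (by simp [h])]

lemma card_Tc {d : ℕ} (c : Fin d → Bool) : (Tc c).card = d := by
  rw [Tc, Finset.card_image_of_injective _ ?_, Finset.card_univ, Fintype.card_fin]
  intro i j hij
  by_cases hi : c i = true <;> by_cases hj : c j = true <;>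
    simp [hi, hj] at hij <;> exact hij

lemma count_lemma {d : ℕ} (G : SimpleGraph (Fin d ⊕ Fin d))
    (hmatch : ∀ i : Fin d, G.Adj (Sum.inl i) (Sum.inr i)) (W : Finset (Fin d ⊕ Fin d))
    (hInd : IsIndep G W) :
    W.card ≤ d ∧
    ((Finset.univ : Finset (Fin d → Bool)).filter (fun c => W ⊆ Tc c)).card
      = 2 ^ (d - W.card) := by
  set A : Finset (Fin d) := Finset.univ.filter (fun i => Sum.inl i ∈ W) with hA
  set B : Finset (Fin d) := Finset.univ.filter (fun i => Sum.inr i ∈ W) with hB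
  have hmemA : ∀ i : Fin d, i ∈ A ↔ Sum.inl i ∈ W := by
    intro i; rw [hA, Finset.mem_filter]; simp
  have hmemB : ∀ i : Fin d, i ∈ B ↔ Sum.inr i ∈ W := by
    intro i; rw [hB, Finset.mem_filter]; simp
  have hAB : Disjoint A B := by
    rw [Finset.disjoint_left]
    intro i hiA hiB
    exact hInd _ ((hmemA i).1 hiA) _ ((hmemB i).1 hiB) (hmatch i)
  have hWeq : W = A.image Sum.inl ∪ B.image Sum.inr := by
    ext w
    cases w with
    | inl j => simp [hmemA, hmemB]
    | inr j => simp [hmemA, hmemB]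
  have hWcard : W.card = A.card + B.card := by
    rw [hWeq, Finset.card_union_of_disjoint, Finset.card_image_of_injective _ Sum.inl_injective,
      Finset.card_image_of_injective _ Sum.inr_injective]
    rw [Finset.disjoint_left]
    rintro w hw1 hw2
    obtain ⟨a, -, rfl⟩ := Finset.mem_image.1 hw1
    obtain ⟨b, -, hb⟩ := Finset.mem_image.1 hw2
    exact absurd hb (by simp)
  have hcardAB : (A ∪ B).card = A.card + B.card := Finset.card_union_of_disjoint hAB
  have hABd : A.card + B.card ≤ d := by
    rw [← hcardAB]
    calc (A ∪ B).card ≤ (Finset.univ : Finset (Fin d)).card := Finset.card_le_card (Finset.subset_univ _)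
      _ = d := by rw [Finset.card_univ, Fintype.card_fin]
  constructor
  · omega
  have hiff : ∀ c : Fin d → Bool, W ⊆ Tc c ↔ (∀ i ∈ A, c i = true) ∧ (∀ i ∈ B, c i = false) := by
    intro c
    constructor
    · intro h
      constructor
      · intro i hi
        exact (mem_Tc_inl c i).1 (h ((hmemA i).1 hi))
      · intro i hi
        exact (mem_Tc_inr c i).1 (h ((hmemB i).1 hi))
    · rintro ⟨h1, h2⟩ w hw
      cases w with
      | inl j => exact (mem_Tc_inl c j).2 (h1 j ((hmemA j).2 hw))
      | inr j => exact (mem_Tc_inr c j).2 (h2 j ((hmemB j).2 hw))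
  have hset : (Finset.univ : Finset (Fin d → Bool)).filter (fun c => W ⊆ Tc c)
      = Fintype.piFinset (fun i => if i ∈ A then ({true} : Finset Bool)
          else if i ∈ B then ({false} : Finset Bool) else Finset.univ) := by
    ext c
    rw [Finset.mem_filter, Fintype.mem_piFinset]
    simp only [Finset.mem_univ, true_and]
    rw [hiff]
    constructor
    · rintro ⟨h1, h2⟩ i
      by_cases hiA : i ∈ A
      · rw [if_pos hiA, Finset.mem_singleton]; exact h1 i hiA
      · rw [if_neg hiA]
        by_cases hiB : i ∈ B
        · rw [if_pos hiB, Finset.mem_singleton]; exact h2 i hiB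
        · rw [if_neg hiB]; exact Finset.mem_univ _
    · intro h
      constructor
      · intro i hiA
        have := h i
        rw [if_pos hiA, Finset.mem_singleton] at this
        exact this
      · intro i hiB
        have hiA : i ∉ A := fun hiA => (Finset.disjoint_left.1 hAB) hiA hiB
        have := h i
        rw [if_neg hiA, if_pos hiB, Finset.mem_singleton] at this
        exact this
  rw [hset, Fintype.card_piFinset]
  have hprod : ∀ i : Fin d, (if i ∈ A then ({true} : Finset Bool)
      else if i ∈ B then ({false} : Finset Bool) else Finset.univ).card
      = if i ∈ A ∪ B then 1 else 2 := by
    intro i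
    by_cases hiA : i ∈ A
    · simp [hiA]
    · by_cases hiB : i ∈ B <;> simp [hiA, hiB]
  rw [Finset.prod_congr rfl (fun i _ => hprod i), Finset.prod_ite, Finset.prod_const,
    Finset.prod_const, one_pow, one_mul]
  congr 1
  have : (Finset.univ.filter (fun i => ¬ i ∈ A ∪ B)) = (A ∪ B)ᶜ := by
    ext i; simp
  rw [this, Finset.card_compl, Fintype.card_fin, hcardAB, hWcard]

lemma M_eq_ncard {d : ℕ} (G : SimpleGraph (Fin d ⊕ Fin d)) :
    {W : Finset (Fin d ⊕ Fin d) | MaxIndep G W}.ncard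
      = ((Finset.univ : Finset (Finset (Fin d ⊕ Fin d))).filter (fun W => MaxIndep G W)).card := by
  have h : {W : Finset (Fin d ⊕ Fin d) | MaxIndep G W}
      = ↑((Finset.univ : Finset (Finset (Fin d ⊕ Fin d))).filter (fun W => MaxIndep G W)) := by
    ext W
    simp [Finset.mem_filter]
  rw [h, Set.ncard_coe_finset]

lemma bound_lemma {d : ℕ} (G : SimpleGraph (Fin d ⊕ Fin d))
    (hmatch : ∀ i : Fin d, G.Adj (Sum.inl i) (Sum.inr i)) :
    ((Finset.univ : Finset (Finset (Fin d ⊕ Fin d))).filter (fun W => MaxIndep G W)).card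
      ≤ 2 ^ d := by
  set M := (Finset.univ : Finset (Finset (Fin d ⊕ Fin d))).filter (fun W => MaxIndep G W) with hM
  have hMmem : ∀ W, W ∈ M ↔ MaxIndep G W := by
    intro W; rw [hM, Finset.mem_filter]; simp
  -- upper bound for each transversal
  have h1 : ∀ c : Fin d → Bool, ∑ W ∈ M.filter (fun W => W ⊆ Tc c), 2 ^ W.card ≤ 2 ^ d := by
    intro c
    have hsub : M.filter (fun W => W ⊆ Tc c) ⊆ Fam G Finset.univ (Tc c) := by
      intro W hW
      rw [Finset.mem_filter] at hW
      obtain ⟨hWM, hWT⟩ := hW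
      have hmax := (maxIndep_iff G W).1 ((hMmem W).1 hWM)
      exact mem_Fam.2 ⟨hWT, hmax.1, fun z _ hz => hmax.2 z hz⟩
    calc ∑ W ∈ M.filter (fun W => W ⊆ Tc c), 2 ^ W.card
        ≤ ∑ W ∈ Fam G Finset.univ (Tc c), 2 ^ W.card := Finset.sum_le_sum_of_subset hsub
      _ ≤ 2 ^ (Tc c).card := key_lemma G (Tc c).card (Tc c) Finset.univ le_rfl (Finset.subset_univ _)
      _ = 2 ^ d := by rw [card_Tc]
  -- double counting
  have h2 : ∑ c ∈ (Finset.univ : Finset (Fin d → Bool)),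
      ∑ W ∈ M.filter (fun W => W ⊆ Tc c), 2 ^ W.card = M.card * 2 ^ d := by
    have step1 : ∀ c : Fin d → Bool, ∑ W ∈ M.filter (fun W => W ⊆ Tc c), 2 ^ W.card
        = ∑ W ∈ M, if W ⊆ Tc c then 2 ^ W.card else 0 := by
      intro c; rw [Finset.sum_filter]
    calc ∑ c ∈ (Finset.univ : Finset (Fin d → Bool)),
          ∑ W ∈ M.filter (fun W => W ⊆ Tc c), 2 ^ W.card
        = ∑ c ∈ (Finset.univ : Finset (Fin d → Bool)),
          ∑ W ∈ M, if W ⊆ Tc c then 2 ^ W.card else 0 :=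
          Finset.sum_congr rfl (fun c _ => step1 c)
      _ = ∑ W ∈ M, ∑ c ∈ (Finset.univ : Finset (Fin d → Bool)),
          if W ⊆ Tc c then 2 ^ W.card else 0 := Finset.sum_comm
      _ = ∑ W ∈ M, 2 ^ d := by
          refine Finset.sum_congr rfl (fun W hW => ?_)
          have hmax := (hMmem W).1 hW
          obtain ⟨hWd, hcount⟩ := count_lemma G hmatch W hmax.1
          calc (∑ c ∈ (Finset.univ : Finset (Fin d → Bool)),
                if W ⊆ Tc c then 2 ^ W.card else 0)
              = ∑ c ∈ (Finset.univ : Finset (Fin d → Bool)).filter (fun c => W ⊆ Tc c),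
                2 ^ W.card := (Finset.sum_filter _ _).symm
            _ = ((Finset.univ : Finset (Fin d → Bool)).filter (fun c => W ⊆ Tc c)).card
                * 2 ^ W.card := by rw [Finset.sum_const, smul_eq_mul]
            _ = 2 ^ (d - W.card) * 2 ^ W.card := by rw [hcount]
            _ = 2 ^ d := by rw [← pow_add]; congr 1; omega
      _ = M.card * 2 ^ d := by rw [Finset.sum_const, smul_eq_mul]
  have h3 : M.card * 2 ^ d ≤ 2 ^ d * 2 ^ d := by
    rw [← h2]
    calc ∑ c ∈ (Finset.univ : Finset (Fin d → Bool)),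
          ∑ W ∈ M.filter (fun W => W ⊆ Tc c), 2 ^ W.card
        ≤ ∑ _c ∈ (Finset.univ : Finset (Fin d → Bool)), 2 ^ d :=
          Finset.sum_le_sum (fun c _ => h1 c)
      _ = (Finset.univ : Finset (Fin d → Bool)).card * 2 ^ d := by
          rw [Finset.sum_const, smul_eq_mul]
      _ ≤ 2 ^ d * 2 ^ d := by
          have : (Finset.univ : Finset (Fin d → Bool)).card = 2 ^ d := by
            rw [Finset.card_univ]
            simp
          rw [this]
  exact Nat.le_of_mul_le_mul_right h3 (Nat.pow_pos (by norm_num))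

lemma exact_lemma {d : ℕ} (G : SimpleGraph (Fin d ⊕ Fin d))
    (hmatch : ∀ i : Fin d, G.Adj (Sum.inl i) (Sum.inr i))
    (hK : ∀ u v, G.Adj u v ↔ ∃ i : Fin d,
        (u = Sum.inl i ∧ v = Sum.inr i) ∨ (u = Sum.inr i ∧ v = Sum.inl i)) :
    ((Finset.univ : Finset (Finset (Fin d ⊕ Fin d))).filter (fun W => MaxIndep G W)).card
      = 2 ^ d := by
  set M := (Finset.univ : Finset (Finset (Fin d ⊕ Fin d))).filter (fun W => MaxIndep G W) with hM
  have hMmem : ∀ W, W ∈ M ↔ MaxIndep G W := by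
    intro W; rw [hM, Finset.mem_filter]; simp
  have hMeq : M = (Finset.univ : Finset (Fin d → Bool)).image Tc := by
    ext W
    rw [hMmem, Finset.mem_image]
    constructor
    · intro hmax
      obtain ⟨hInd, hdom⟩ := (maxIndep_iff G W).1 hmax
      have hcover : ∀ i : Fin d, Sum.inl i ∈ W ∨ Sum.inr i ∈ W := by
        intro i
        by_contra hcon
        push_neg at hcon
        obtain ⟨h1, h2⟩ := hcon
        obtain ⟨w, hwW, hadj⟩ := hdom (Sum.inl i) h1
        rw [hK] at hadj
        obtain ⟨j, hj⟩ := hadj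
        rcases hj with ⟨hji, hw⟩ | ⟨hji, hw⟩
        · cases Sum.inl_injective hji
          exact h2 (hw ▸ hwW)
        · exact absurd hji (by simp)
      refine ⟨fun i => if Sum.inl i ∈ W then true else false, Finset.mem_univ _, ?_⟩
      ext w
      cases w with
      | inl j =>
        rw [mem_Tc_inl]
        constructor
        · intro h
          by_cases hj : Sum.inl j ∈ W
          · exact hj
          · rw [if_neg hj] at h; exact absurd h (by simp)
        · intro h
          rw [if_pos h]
      | inr j =>
        rw [mem_Tc_inr]
        constructor
        · intro h
          by_cases hj : Sum.inl j ∈ W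
          · exact absurd (if_pos hj) (by rw [h]; simp)
          · rcases hcover j with h' | h'
            · exact absurd h' hj
            · exact h'
        · intro h
          have hj : Sum.inl j ∉ W := fun hj => hInd _ hj _ h (hmatch j)
          rw [if_neg hj]
    · rintro ⟨c, -, rfl⟩
      rw [maxIndep_iff]
      constructor
      · intro u hu v hv hadj
        rw [hK] at hadj
        obtain ⟨j, hj⟩ := hadj
        rcases hj with ⟨rfl, rfl⟩ | ⟨rfl, rfl⟩
        · rw [mem_Tc_inl] at hu
          rw [mem_Tc_inr] at hv
          rw [hu] at hv
          exact absurd hv (by simp)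
        · rw [mem_Tc_inr] at hu
          rw [mem_Tc_inl] at hv
          rw [hv] at hu
          exact absurd hu (by simp)
      · intro z hz
        cases z with
        | inl j =>
          have : c j = false := by
            rcases Bool.eq_false_or_eq_true (c j) with h | h
            · exact absurd ((mem_Tc_inl c j).2 h) hz
            · exact h
          exact ⟨Sum.inr j, (mem_Tc_inr c j).2 this, hmatch j⟩
        | inr j =>
          have : c j = true := by
            rcases Bool.eq_false_or_eq_true (c j) with h | h
            · exact h
            · exact absurd ((mem_Tc_inr c j).2 h) hz
          exact ⟨Sum.inl j, (mem_Tc_inl c j).2 this, (hmatch j).symm⟩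
  have hTcinj : Function.Injective (Tc (d := d)) := by
    intro c c' h
    funext i
    rcases Bool.eq_false_or_eq_true (c i) with hci | hci
    · have : Sum.inl i ∈ Tc c := (mem_Tc_inl c i).2 hci
      rw [h, mem_Tc_inl] at this
      rw [hci, this]
    · have : Sum.inr i ∈ Tc c := (mem_Tc_inr c i).2 hci
      rw [h, mem_Tc_inr] at this
      rw [hci, this]
  rw [hMeq, Finset.card_image_of_injective _ hTcinj, Finset.card_univ]
  simp

/-- Let `G` be a graph on `{x_1, …, x_d, y_1, …, y_d}` such that each
`{x_i, y_i}` is an edge.  Then `G` has at most `2^d` maximal independent sets,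
and if `G = dK_2` (the only edges are the `{x_i, y_i}`) it has exactly `2^d`.
Here `Sum.inl i = x_i` and `Sum.inr i = y_i`. -/
theorem stmt_15 {d : ℕ} (G : SimpleGraph (Fin d ⊕ Fin d))
    (hmatch : ∀ i : Fin d, G.Adj (Sum.inl i) (Sum.inr i)) :
    {W : Finset (Fin d ⊕ Fin d) | MaxIndep G W}.ncard ≤ 2 ^ d ∧
    ((∀ u v, G.Adj u v ↔ ∃ i : Fin d,
        (u = Sum.inl i ∧ v = Sum.inr i) ∨ (u = Sum.inr i ∧ v = Sum.inl i)) →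
      {W : Finset (Fin d ⊕ Fin d) | MaxIndep G W}.ncard = 2 ^ d) := by
  constructor
  · rw [M_eq_ncard]
    exact bound_lemma G hmatch
  · intro hK
    rw [M_eq_ncard]
    exact exact_lemma G hmatch hK
end

section
/- Let Δ be a simplicial complex on V = {x_1,…,x_n} and χ the n-colouring into singletons. Then the map F ↦ F ∪ {y_j : x_j ∉ F} is a bijection between faces of Δ and facets of Δ_χ. -/
/-- The `x`-part of a set of vertices of `Δ_χ`: the indices `i` with `x_i ∈ S`. -/
def xpart {n : ℕ} (S : Finset (Fin n ⊕ Fin n)) : Finset (Fin n) :=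
  Finset.univ.filter (fun i => Sum.inl i ∈ S)

/-- Faces of the generalized whiskered complex `Δ_χ` for the `n`-colouring into
singletons: sets `F ∪ G` with `F ∈ Δ` and `G ⊆ {y_j : x_j ∉ F}`. -/
def whiskFace {n : ℕ} (Δ : Finset (Fin n) → Prop) (S : Finset (Fin n ⊕ Fin n)) : Prop :=
  Δ (xpart S) ∧ ∀ j : Fin n, Sum.inr j ∈ S → Sum.inl j ∉ S

/-- `F` is a facet (maximal face) of the collection of faces `C`. -/
def IsFacet {α : Type*} (C : Finset α → Prop) (F : Finset α) : Prop :=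
  C F ∧ ∀ G, C G → F ⊆ G → F = G

private def wmap {n : ℕ} (F : Finset (Fin n)) : Finset (Fin n ⊕ Fin n) :=
  F.image Sum.inl ∪ (Finset.univ.filter (fun j => j ∉ F)).image Sum.inr

private lemma mem_wmap_inl {n : ℕ} (F : Finset (Fin n)) (i : Fin n) :
    Sum.inl i ∈ wmap F ↔ i ∈ F := by
  simp [wmap]

private lemma mem_wmap_inr {n : ℕ} (F : Finset (Fin n)) (i : Fin n) :
    Sum.inr i ∈ wmap F ↔ i ∉ F := by
  simp [wmap]

private lemma xpart_wmap {n : ℕ} (F : Finset (Fin n)) : xpart (wmap F) = F := by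
  ext i; simp [xpart, mem_wmap_inl]

private lemma wmap_face {n : ℕ} (Δ : Finset (Fin n) → Prop) (F : Finset (Fin n)) (hF : Δ F) :
    whiskFace Δ (wmap F) := by
  refine ⟨by rwa [xpart_wmap], fun j hj => ?_⟩
  rw [mem_wmap_inr] at hj; rw [mem_wmap_inl]; exact hj

private lemma wmap_facet {n : ℕ} (Δ : Finset (Fin n) → Prop) (F : Finset (Fin n)) (hF : Δ F) :
    IsFacet (whiskFace Δ) (wmap F) := by
  refine ⟨wmap_face Δ F hF, fun G hG hsub => ?_⟩
  apply Finset.Subset.antisymm hsub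
  intro a ha
  rcases a with i | j
  · rw [mem_wmap_inl]
    by_contra hi
    exact hG.2 i (hsub ((mem_wmap_inr F i).2 hi)) ha
  · rw [mem_wmap_inr]
    intro hj
    exact hG.2 j ha (hsub ((mem_wmap_inl F j).2 hj))

/-- For the `n`-colouring of `Δ` into singletons, the map
`F ↦ F ∪ {y_j : x_j ∉ F}` is a bijection between the faces of `Δ` and the
facets of `Δ_χ`. -/
theorem stmt_16 {n : ℕ} (Δ : Finset (Fin n) → Prop)
    (hDC : ∀ F G : Finset (Fin n), Δ F → G ⊆ F → Δ G) :
    Set.BijOn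
      (fun F : Finset (Fin n) =>
        (F.image Sum.inl ∪ (Finset.univ.filter (fun j => j ∉ F)).image Sum.inr :
          Finset (Fin n ⊕ Fin n)))
      {F | Δ F} {S | IsFacet (whiskFace Δ) S} := by
  have hfun : (fun F : Finset (Fin n) =>
        (F.image Sum.inl ∪ (Finset.univ.filter (fun j => j ∉ F)).image Sum.inr :
          Finset (Fin n ⊕ Fin n))) = wmap := rfl
  rw [hfun]
  refine ⟨fun F hF => wmap_facet Δ F hF, fun F _ G _ h => ?_, fun S hS => ?_⟩
  · have := congrArg xpart h
    rwa [xpart_wmap, xpart_wmap] at this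
  · refine ⟨xpart S, hS.1.1, ?_⟩
    apply (hS.2 (wmap (xpart S)) (wmap_face Δ _ hS.1.1) ?_).symm
    intro a ha
    rcases a with i | j
    · rw [mem_wmap_inl]; simp [xpart, ha]
    · rw [mem_wmap_inr]
      intro hj
      simp [xpart] at hj
      exact hS.1.2 j ha hj
end

section
/- Let Δ be a simplicial complex on V = {x_1,…,x_n}, not equal to the full simplex, and χ the n-colouring into singletons. Then Δ_χ has a face of cardinality n−1 contained in exactly one facet. -/
lemma mem_inl_union {n : ℕ} {F A : Finset (Fin n)} {j : Fin n} :
    Sum.inl j ∈ F.image Sum.inl ∪ A.image Sum.inr ↔ j ∈ F := by simp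

lemma mem_inr_union {n : ℕ} {F A : Finset (Fin n)} {j : Fin n} :
    Sum.inr j ∈ F.image Sum.inl ∪ A.image Sum.inr ↔ j ∈ A := by simp

lemma xpart_union {n : ℕ} (F A : Finset (Fin n)) :
    xpart (F.image Sum.inl ∪ A.image Sum.inr) = F := by
  ext j; simp [xpart]

lemma card_union_images {n : ℕ} (F A : Finset (Fin n)) :
    (F.image Sum.inl ∪ A.image Sum.inr).card = F.card + A.card := by
  rw [Finset.card_union_of_disjoint, Finset.card_image_of_injective _ Sum.inl_injective,
    Finset.card_image_of_injective _ Sum.inr_injective]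
  simp [Finset.disjoint_left]

/-- Let `Δ` be a simplicial complex on `{x_1, …, x_n}` that is not the full
simplex, and `χ` the `n`-colouring into singletons.  Then `Δ_χ` has a face of
cardinality `n - 1` contained in exactly one facet. -/
theorem stmt_19 {n : ℕ} (Δ : Finset (Fin n) → Prop)
    (hDC : ∀ F G : Finset (Fin n), Δ F → G ⊆ F → Δ G)
    (hempty : Δ ∅)
    (hnotfull : ¬ ∀ F : Finset (Fin n), Δ F) :
    ∃ S : Finset (Fin n ⊕ Fin n), whiskFace Δ S ∧ S.card + 1 = n ∧
      ∃! F : Finset (Fin n ⊕ Fin n), IsFacet (whiskFace Δ) F ∧ S ⊆ F := by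
  classical
  obtain ⟨N₀, hN₀⟩ := not_forall.mp hnotfull
  have hex : ∃ m, ∃ F : Finset (Fin n), F.card = m ∧ ¬ Δ F := ⟨N₀.card, N₀, rfl, hN₀⟩
  obtain ⟨N, hNcard, hNnot⟩ := Nat.find_spec hex
  have hmin : ∀ F : Finset (Fin n), F.card < N.card → Δ F := by
    intro F hF
    by_contra h
    exact Nat.find_min hex (hNcard ▸ hF) ⟨F, rfl, h⟩
  have hNne : N.Nonempty := by
    rcases N.eq_empty_or_nonempty with h | h
    · exact absurd (h ▸ hempty) hNnot
    · exact h
  obtain ⟨i, hi⟩ := hNne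
  set F : Finset (Fin n) := N.erase i with hFdef
  have hΔF : Δ F := hmin F (Finset.card_erase_lt_of_mem hi)
  have hiF : i ∉ F := Finset.notMem_erase i N
  have hinsert : insert i F = N := Finset.insert_erase hi
  have hNle : N.card ≤ n := by
    simpa using Finset.card_le_univ N
  have hFlt : F.card < n :=
    lt_of_lt_of_le (Finset.card_erase_lt_of_mem hi) hNle
  set A : Finset (Fin n) := (Finset.univ \ F).erase i with hAdef
  set S : Finset (Fin n ⊕ Fin n) := F.image Sum.inl ∪ A.image Sum.inr with hSdef
  set T : Finset (Fin n ⊕ Fin n) := F.image Sum.inl ∪ (Finset.univ \ F).image Sum.inr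
    with hTdef
  have hAF : ∀ j ∈ A, j ∉ F := by
    intro j hj
    have := Finset.mem_of_mem_erase hj
    simpa using (Finset.mem_sdiff.mp this).2
  have hAcard : A.card = n - F.card - 1 := by
    have hiA : i ∈ Finset.univ \ F := by simp [hiF]
    rw [hAdef, Finset.card_erase_of_mem hiA, Finset.card_sdiff_of_subset (Finset.subset_univ F)]
    simp
  -- S is a face
  have hSface : whiskFace Δ S := by
    constructor
    · rw [hSdef, xpart_union]; exact hΔF
    · intro j hj hj'
      exact hAF j (mem_inr_union.mp hj) (mem_inl_union.mp hj')
  -- T is a facet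
  have hTface : whiskFace Δ T := by
    constructor
    · rw [hTdef, xpart_union]; exact hΔF
    · intro j hj hj'
      have hjn : j ∈ Finset.univ \ F := mem_inr_union.mp hj
      exact (Finset.mem_sdiff.mp hjn).2 (mem_inl_union.mp hj')
  have hTfacet : IsFacet (whiskFace Δ) T := by
    refine ⟨hTface, fun G hG hTG => ?_⟩
    apply Finset.Subset.antisymm hTG
    intro s hs
    match s with
    | Sum.inl j =>
      rw [hTdef, mem_inl_union]
      by_contra hjF
      have hjT : Sum.inr j ∈ T := by rw [hTdef, mem_inr_union]; simp [hjF]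
      exact hG.2 j (hTG hjT) hs
    | Sum.inr j =>
      rw [hTdef, mem_inr_union, Finset.mem_sdiff]
      refine ⟨Finset.mem_univ j, fun hjF => ?_⟩
      have : Sum.inl j ∈ T := by rw [hTdef, mem_inl_union]; exact hjF
      exact hG.2 j hs (hTG this)
  have hST : S ⊆ T := by
    intro s hs
    rw [hSdef] at hs
    rw [hTdef]
    rcases Finset.mem_union.mp hs with h | h
    · exact Finset.mem_union_left _ h
    · apply Finset.mem_union_right
      obtain ⟨j, hj, rfl⟩ := Finset.mem_image.mp h
      exact Finset.mem_image_of_mem _ (Finset.mem_of_mem_erase hj)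
  refine ⟨S, hSface, ?_, T, ⟨hTfacet, hST⟩, ?_⟩
  · rw [hSdef, card_union_images, hAcard]
    omega
  · rintro G ⟨hGfacet, hSG⟩
    -- show xpart G = F
    have hxG : xpart G = F := by
      apply Finset.Subset.antisymm
      · intro j hj
        have hjG : Sum.inl j ∈ G := by simpa [xpart] using hj
        by_contra hjF
        by_cases hji : j = i
        · -- then N ⊆ xpart G, contradiction with Δ (xpart G)
          have hsub : N ⊆ xpart G := by
            intro k hk
            by_cases hki : k = i
            · subst hki; simpa [xpart] using hji ▸ hjG
            · have : k ∈ F := Finset.mem_erase.mpr ⟨hki, hk⟩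
              have : Sum.inl k ∈ G := hSG (by rw [hSdef, mem_inl_union]; exact this)
              simpa [xpart] using this
          exact hNnot (hDC _ _ hGfacet.1.1 hsub)
        · have hjA : j ∈ A := by
            rw [hAdef]
            exact Finset.mem_erase.mpr ⟨hji, by simp [hjF]⟩
          have : Sum.inr j ∈ G := hSG (by rw [hSdef, mem_inr_union]; exact hjA)
          exact hGfacet.1.2 j this hjG
      · intro j hj
        have : Sum.inl j ∈ G := hSG (by rw [hSdef, mem_inl_union]; exact hj)
        simpa [xpart] using this
    -- G ⊆ T
    have hGT : G ⊆ T := by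
      intro s hs
      match s with
      | Sum.inl j =>
        have : j ∈ xpart G := by simpa [xpart] using hs
        rw [hTdef, mem_inl_union]
        exact hxG ▸ this
      | Sum.inr j =>
        rw [hTdef, mem_inr_union, Finset.mem_sdiff]
        refine ⟨Finset.mem_univ j, fun hjF => ?_⟩
        have : Sum.inl j ∈ G := by
          have : j ∈ xpart G := hxG ▸ hjF
          simpa [xpart] using this
        exact hGfacet.1.2 j hs this
    exact hGfacet.2 T hTface hGT
end
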